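/- arXiv:2310.01737 — 2 statements merged into one kernel-verified Lean document; each statement's English description precedes it below -/
import Mathlib

section
/- Generalized performance difference lemma (distribution form): for every (possibly nonstationary) stochastic policy π, every time-indexed baseline f = (f_t : S → ℝ)_{0 ≤ t ≤ H} with f_H ≡ 0, and every initial distribution d_0 ∈ PMF(S), E_{s∼d_0}[ V^π_0(s) ] − E_{s∼d_0}[ f_0(s) ] = Σ_{t=0}^{H−1} E_{s ∼ d^π_t}[ A^f_t(s, π) ]. -/
/-!
Write `D t = E_{d_t}[V_t - f_t]`. Unfolding the Bellman recursion for `V_t` and the transition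
`d_{t+1} = d_t ⊗ π_t ⊗ P`, the expected advantage at time `t` is exactly `D t - D (t + 1)`.
Summing over `t < H` telescopes to `D 0 - D H`, and `D H = 0` because `V_H = f_H = 0`.
-/

open scoped BigOperators

/-- Expectation of a real-valued function under a probability mass function on a finite type. -/
noncomputable def pexp {α : Type*} [Fintype α] (p : PMF α) (f : α → ℝ) : ℝ :=
  ∑ a, (p a).toReal * f a

open Finset

section Expectation

variable {α β : Type*} [Fintype α]

lemma pexp_sub (p : PMF α) (g h : α → ℝ) :
    pexp p (fun a => g a - h a) = pexp p g - pexp p h := by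
  simp only [pexp, mul_sub, sum_sub_distrib]

lemma PMF.sum_toReal_eq_one (p : PMF α) : ∑ a, (p a).toReal = 1 := by
  rw [← ENNReal.toReal_sum fun a _ => p.apply_ne_top a, ← tsum_fintype (L := .unconditional _),
    p.tsum_coe, ENNReal.toReal_one]

lemma pexp_const (p : PMF α) (c : ℝ) : pexp p (fun _ => c) = c := by
  rw [pexp, ← sum_mul, p.sum_toReal_eq_one, one_mul]

lemma pexp_bind [Fintype β] (p : PMF α) (q : α → PMF β) (g : β → ℝ) :
    pexp (p.bind q) g = pexp p (fun a => pexp (q a) g) := by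
  have hbind : ∀ b, ((p.bind q) b).toReal = ∑ a, (p a).toReal * (q a b).toReal := fun b => by
    rw [PMF.bind_apply, tsum_fintype, ENNReal.toReal_sum fun a _ =>
      ENNReal.mul_ne_top (p.apply_ne_top a) ((q a).apply_ne_top b)]
    simp only [ENNReal.toReal_mul]
  simp only [pexp, hbind, sum_mul, mul_sum, mul_assoc]
  exact sum_comm

end Expectation

lemma pexp_advantage_eq_sub {S A : Type*} [Fintype S] [Fintype A]
    (P : S → A → PMF S) (r : S → A → ℝ) (π : S → PMF A) (μ : PMF S)
    (V V' f f' : S → ℝ)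
    (hV : ∀ s, V s = pexp (π s) (fun a => r s a + pexp (P s a) V')) :
    pexp μ (fun s => pexp (π s) (fun a => r s a + pexp (P s a) f' - f s)) =
      pexp μ (fun s => V s - f s) -
        pexp (μ.bind fun s => (π s).bind fun a => P s a) (fun s => V' s - f' s) := by
  have hstate : ∀ s, pexp (π s) (fun a => r s a + pexp (P s a) f' - f s) =
      V s - f s - pexp (π s) (fun a => pexp (P s a) (fun s' => V' s' - f' s')) := fun s =>
    calc pexp (π s) (fun a => r s a + pexp (P s a) f' - f s)
        = pexp (π s) (fun a => r s a + pexp (P s a) V' -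
            pexp (P s a) (fun s' => V' s' - f' s') - f s) := by
          congr 1; funext a; rw [pexp_sub]; ring
      _ = _ := by rw [pexp_sub, pexp_sub, pexp_const, hV s]; ring
  simp only [hstate, pexp_bind, pexp_sub]

theorem generalized_performance_difference_distribution_general
    {S A : Type*} [Fintype S] [Fintype A]
    (P : S → A → PMF S) (r : S → A → ℝ)
    (H : ℕ)
    (π : ℕ → S → PMF A)
    (V : ℕ → S → ℝ)
    (hVH : ∀ s, V H s = 0)
    (hV : ∀ t, t < H → ∀ s,
      V t s = pexp (π t s) (fun a => r s a + pexp (P s a) (V (t + 1))))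
    (f : ℕ → S → ℝ)
    (hfH : ∀ s, f H s = 0)
    (d₀ : PMF S)
    (d : ℕ → PMF S)
    (hd0 : d 0 = d₀)
    (hd : ∀ t, d (t + 1) = (d t).bind fun s => (π t s).bind fun a => P s a) :
    pexp d₀ (fun s => V 0 s) - pexp d₀ (fun s => f 0 s) =
      ∑ t ∈ Finset.range H,
        pexp (d t) (fun s =>
          pexp (π t s) (fun a => r s a + pexp (P s a) (f (t + 1)) - f t s)) := by
  set D : ℕ → ℝ := fun t => pexp (d t) (fun s => V t s - f t s)
  have hDH : D H = 0 := by
    simp only [D, hVH, hfH, sub_self, pexp_const]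
  calc pexp d₀ (fun s => V 0 s) - pexp d₀ (fun s => f 0 s)
      = D 0 - D H := by rw [hDH, sub_zero, ← hd0, ← pexp_sub]
    _ = ∑ t ∈ range H, (D t - D (t + 1)) := (sum_range_sub' D H).symm
    _ = _ := sum_congr rfl fun t ht => by
      rw [pexp_advantage_eq_sub P r (π t) (d t) (V t) (V (t + 1)) (f t) (f (t + 1))
        (hV t (mem_range.mp ht)), ← hd t]

/-- Generalized performance difference lemma (distribution form):
for every (possibly nonstationary) stochastic policy `π`, every time-indexed baseline `f`
with `f H ≡ 0`, and every initial distribution `d₀`,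
`E_{s∼d₀}[ V^π_0(s) ] − E_{s∼d₀}[ f_0(s) ] = Σ_{t=0}^{H−1} E_{s ∼ d^π_t}[ A^f_t(s, π) ]`. -/
theorem generalized_performance_difference_distribution
    {S A : Type*} [Fintype S] [Nonempty S] [Fintype A] [Nonempty A]
    (P : S → A → PMF S) (r : S → A → ℝ)
    (hr : ∀ s a, 0 ≤ r s a ∧ r s a ≤ 1)
    (H : ℕ)
    (π : ℕ → S → PMF A)
    (V : ℕ → S → ℝ)
    (hVH : ∀ s, V H s = 0)
    (hV : ∀ t, t < H → ∀ s,
      V t s = pexp (π t s) (fun a => r s a + pexp (P s a) (V (t + 1))))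
    (f : ℕ → S → ℝ)
    (hfH : ∀ s, f H s = 0)
    (d₀ : PMF S)
    (d : ℕ → PMF S)
    (hd0 : d 0 = d₀)
    (hd : ∀ t, d (t + 1) = (d t).bind fun s => (π t s).bind fun a => P s a) :
    pexp d₀ (fun s => V 0 s) - pexp d₀ (fun s => f 0 s) =
      ∑ t ∈ Finset.range H,
        pexp (d t) (fun s =>
          pexp (π t s) (fun a => r s a + pexp (P s a) (f (t + 1)) - f t s)) :=
  generalized_performance_difference_distribution_general P r H π V hVH hV f hfH d₀ d hd0 hd
end

section
/- Proposition 1 (initial-distribution form): for every initial distribution d_0 ∈ PMF(S), the max⁺-following policy π° satisfies E_{s∼d_0}[ V^{π°}_0(s) ] ≥ max_{k∈[K]} E_{s∼d_0}[ V^{π^k}_0(s) ]. -/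
open scoped BigOperators

lemma pexp_mono {α : Type*} [Fintype α] (p : PMF α) {f g : α → ℝ}
    (h : ∀ a, f a ≤ g a) : pexp p f ≤ pexp p g := by
  unfold pexp
  exact Finset.sum_le_sum fun a _ =>
    mul_le_mul_of_nonneg_left (h a) ENNReal.toReal_nonneg

/-- Proposition 1 (initial-distribution form): for every initial distribution `d₀`,
the max⁺-following policy `π°` satisfies
`E_{s∼d₀}[ V^{π°}_0(s) ] ≥ max_{k∈[K]} E_{s∼d₀}[ V^{π^k}_0(s) ]`. -/
theorem maxplus_following_value_dominance_initial_distribution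
    {S A : Type*} [Fintype S] [Nonempty S] [Fintype A] [Nonempty A]
    (P : S → A → PMF S) (r : S → A → ℝ)
    (hr : ∀ s a, 0 ≤ r s a ∧ r s a ≤ 1)
    (H : ℕ)
    (K : ℕ) (hK : 1 ≤ K)
    (πs : Fin K → ℕ → S → PMF A)
    (Vs : Fin K → ℕ → S → ℝ)
    (hVsH : ∀ k s, Vs k H s = 0)
    (hVs : ∀ k t, t < H → ∀ s,
      Vs k t s = pexp (πs k t s) (fun a => r s a + pexp (P s a) (Vs k (t + 1))))
    (fplus : ℕ → S → ℝ)
    (hfplus : ∀ t s, fplus t s = ⨆ k : Fin K, Vs k t s)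
    (kstar : ℕ → S → Fin K)
    (hkstar : ∀ t s, Vs (kstar t s) t s = fplus t s)
    (Vo : ℕ → S → ℝ)
    (hVoH : ∀ s, Vo H s = 0)
    (hVo : ∀ t, t < H → ∀ s,
      Vo t s = pexp (πs (kstar t s) t s) (fun a => r s a + pexp (P s a) (Vo (t + 1))))
    (d₀ : PMF S) :
    (⨆ k : Fin K, pexp d₀ (fun s => Vs k 0 s)) ≤ pexp d₀ (fun s => Vo 0 s) := by
  haveI : Nonempty (Fin K) := ⟨⟨0, hK⟩⟩
  -- Vs k t s ≤ fplus t s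
  have hle : ∀ k t s, Vs k t s ≤ fplus t s := by
    intro k t s
    rw [hfplus]
    exact le_ciSup (f := fun k => Vs k t s) (Set.Finite.bddAbove (Set.finite_range _)) k
  -- key: fplus (H - n) s ≤ Vo (H - n) s
  have key : ∀ n s, fplus (H - n) s ≤ Vo (H - n) s := by
    intro n
    induction n with
    | zero =>
      intro s
      simp only [Nat.sub_zero, hVoH, hfplus]
      exact ciSup_le fun k => le_of_eq (hVsH k s)
    | succ n ih =>
      intro s
      by_cases hn : H ≤ n
      · have : H - (n + 1) = H - n := by omega
        rw [this]; exact ih s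
      · push_neg at hn
        set t := H - (n + 1) with ht
        have htH : t < H := by omega
        have ht1 : t + 1 = H - n := by omega
        calc fplus t s = Vs (kstar t s) t s := (hkstar t s).symm
          _ = pexp (πs (kstar t s) t s)
                (fun a => r s a + pexp (P s a) (Vs (kstar t s) (t + 1))) :=
              hVs _ t htH s
          _ ≤ pexp (πs (kstar t s) t s)
                (fun a => r s a + pexp (P s a) (Vo (t + 1))) := by
              refine pexp_mono _ fun a => add_le_add_right (pexp_mono _ fun s' => ?_) _
              refine le_trans (hle _ _ _) ?_
              rw [ht1]; exact ih s'
          _ = Vo t s := (hVo t htH s).symm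
  have h0 : ∀ s, fplus 0 s ≤ Vo 0 s := by
    have := key H
    simpa using this
  exact ciSup_le fun k => pexp_mono d₀ fun s => le_trans (hle k 0 s) (h0 s)
end
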